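/- For all n ≥ k ≥ 1, the sum of q^{vrs(w)} over all RGFs w of length n with maximum letter k equals S̃_q(n,k). -/

import Mathlib

open Finset

variable {n : ℕ}

/-- Positions of leftmost occurrences of letters in the word `w`. -/
def Lset (w : Fin n → ℕ) : Finset (Fin n) :=
  Finset.univ.filter fun i => ∀ j, j < i → w j ≠ w i

/-- Positions of rightmost occurrences of letters in the word `w`. -/
def Rset (w : Fin n → ℕ) : Finset (Fin n) :=
  Finset.univ.filter fun i => ∀ j, i < j → w j ≠ w i

/-- The maximum letter of the word `w`. -/
def bk (w : Fin n → ℕ) : ℕ := Finset.univ.sup w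

/-- The (1-indexed) position of the rightmost `1` in `w`. -/
def pro (w : Fin n → ℕ) : ℕ :=
  (Finset.univ.filter fun i => w i = 1).sup fun i => (i : ℕ) + 1

def lsi (w : Fin n → ℕ) (i : Fin n) : ℕ :=
  ((Lset w).filter fun j => j < i ∧ w j < w i).card

def rsi (w : Fin n → ℕ) (i : Fin n) : ℕ :=
  ((Rset w).filter fun j => i < j ∧ w j < w i).card

def vlsi (w : Fin n → ℕ) (i : Fin n) : ℕ :=
  if i ∉ Rset w ∧ pro w < (i : ℕ) + 1 then lsi w i - 1
  else if i ∈ Rset w ∧ (i : ℕ) + 1 < pro w then lsi w i + 1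
  else lsi w i

def vrsi (w : Fin n → ℕ) (i : Fin n) : ℕ :=
  if i ∉ Rset w ∧ pro w < (i : ℕ) + 1 then rsi w i + 1
  else if i ∈ Rset w ∧ (i : ℕ) + 1 < pro w then rsi w i - 1
  else rsi w i

def ls (w : Fin n → ℕ) : ℕ := ∑ i, lsi w i
def rs (w : Fin n → ℕ) : ℕ := ∑ i, rsi w i
def vls (w : Fin n → ℕ) : ℕ := ∑ i, vlsi w i
def vrs (w : Fin n → ℕ) : ℕ := ∑ i, vrsi w i

/-- `w` is a restricted growth function: positive letters, `w₁ = 1`, and each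
letter is at most one more than the maximum of the preceding letters. -/
def IsRGF (w : Fin n → ℕ) : Prop :=
  (∀ i, 1 ≤ w i) ∧ (∀ i : Fin n, (i : ℕ) = 0 → w i = 1) ∧
    ∀ i : Fin n, 0 < (i : ℕ) → w i ≤ (Finset.univ.filter fun j => j < i).sup w + 1

/-- The ascent set of `w`. -/
def AscSet (w : Fin n → ℕ) : Finset (Fin n) :=
  Finset.univ.filter fun i => ∃ j : Fin n, (j : ℕ) = (i : ℕ) + 1 ∧ w i < w j

open Polynomial in
/-- The q-integer [k]_q. -/
noncomputable def qint (k : ℕ) : Polynomial ℚ := ∑ i ∈ Finset.range k, X ^ i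

/-- The q-Stirling number S̃_q(n,k). -/
noncomputable def Sqt : ℕ → ℕ → Polynomial ℚ
  | 0, 0 => 1
  | 0, _ + 1 => 0
  | _ + 1, 0 => 0
  | n + 1, k + 1 => Sqt n k + qint (k + 1) * Sqt n (k + 1)

/-!
Write `c_a(w)` (`largerAfterLast w a`) for the number of positions after the last occurrence of
`a` in `w` carrying a letter larger than `a`. Appending `a` to a word raises `rs` by exactly
`c_a`, and for an RGF `w` of positive length the corrections turning `rs` into `vrs` add up
to `n + 1 - bk w - pro w`, i.e. `vrs w + bk w + pro w = rs w + n + 1`. Hence appending a new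
maximum or a `1` to an RGF leaves `vrs` unchanged, while appending `a ∈ [2, k]` adds `c_a + 1`.

To absorb the `c_a` one proves, by induction on `n`, that for every set `S` of letters `≥ 2`
the sum of `q ^ (vrs w + ∑_{l ∈ S} c_l(w))` over RGFs of length `n` with maximum `k` is
`q ^ (∑_{l ∈ S} (k - l)) * S̃_q(n, k)`. Appending `a ∈ [2, k]` contributes the factor
`q ^ (1 + #{l ∈ S | l < a} + [a ∉ S] (k - a))`, and these exponents run exactly once over
`1, …, k - 1`, which produces `[k]_q - 1`.
-/

open Fin

section RightmostOccurrences

variable (p : Fin n → ℕ) (a : ℕ)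

theorem last_mem_Rset (w : Fin (n + 1) → ℕ) : last n ∈ Rset w := by
  simp [Rset, not_lt.mpr (le_last _)]

theorem castSucc_mem_Rset_snoc_iff {i : Fin n} :
    castSucc i ∈ Rset (snoc p a) ↔ i ∈ Rset p ∧ p i ≠ a := by
  simp only [Rset, mem_filter, mem_univ, true_and, Fin.forall_fin_succ', snoc_castSucc,
    snoc_last, castSucc_lt_castSucc_iff, castSucc_lt_last, forall_const]
  exact and_congr_right' ne_comm

theorem Rset_snoc :
    Rset (snoc p a) = insert (last n) (((Rset p).filter (p · ≠ a)).map castSuccEmb) := by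
  ext j
  induction j using Fin.lastCases with
  | last => simp [last_mem_Rset]
  | cast i => simp [castSucc_mem_Rset_snoc_iff, castSucc_ne_last]

theorem Rset_injOn {w : Fin n → ℕ} : Set.InjOn w (Rset w) := by
  intro s hs t ht h
  simp only [coe_filter, Rset, mem_univ, true_and, Set.mem_ofPred_eq] at hs ht
  rcases lt_trichotomy s t with hst | rfl | hts
  · exact absurd h.symm (hs t hst)
  · rfl
  · exact absurd h (ht s hts)

theorem exists_mem_Rset_le {w : Fin n → ℕ} (j : Fin n) :
    ∃ t ∈ Rset w, w t = w j ∧ j ≤ t := by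
  have hne : (univ.filter fun i => w i = w j).Nonempty := ⟨j, by simp⟩
  set t := (univ.filter fun i => w i = w j).max' hne
  have ht : w t = w j := (mem_filter.mp (max'_mem _ hne)).2
  have hmax : ∀ i, w i = w j → i ≤ t := fun i hi => le_max' _ i (by simpa using hi)
  refine ⟨t, ?_, ht, hmax j rfl⟩
  simp only [Rset, mem_filter, mem_univ, true_and, ht]
  exact fun l hl hlj => not_le.mpr hl (hmax l hlj)

theorem card_Rset_eq_card_image (w : Fin n → ℕ) : #(Rset w) = #(univ.image w) := by
  rw [← card_image_of_injOn Rset_injOn]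
  congr 1
  ext x
  simp only [mem_image, mem_univ, true_and]
  constructor
  · rintro ⟨t, -, rfl⟩
    exact ⟨t, rfl⟩
  · rintro ⟨j, rfl⟩
    obtain ⟨t, ht, htj, -⟩ := exists_mem_Rset_le j
    exact ⟨t, ht, htj⟩

theorem card_filter_Rset_eq_and_lt (i : Fin n) :
    #((Rset p).filter fun j => p j = a ∧ i < j) = if ∃ j, i < j ∧ p j = a then 1 else 0 := by
  split_ifs with h
  · obtain ⟨j, hij, rfl⟩ := h
    obtain ⟨t, ht, htj, hjt⟩ := exists_mem_Rset_le j
    refine card_eq_one.mpr ⟨t, eq_singleton_iff_unique_mem.mpr ⟨?_, fun x hx => ?_⟩⟩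
    · exact mem_filter.mpr ⟨ht, htj, hij.trans_le hjt⟩
    · exact Rset_injOn (mem_filter.mp hx).1 ht ((mem_filter.mp hx).2.1.trans htj.symm)
  · exact card_eq_zero.mpr (filter_eq_empty_iff.mpr fun x _ hx => h ⟨x, hx.2, hx.1⟩)

end RightmostOccurrences

def largerAfterLast (w : Fin n → ℕ) (a : ℕ) : ℕ :=
  #(univ.filter fun i => a < w i ∧ ∀ l, i ≤ l → w l ≠ a)

section Snoc

variable (p : Fin n → ℕ) (a : ℕ)

theorem rsi_last (w : Fin (n + 1) → ℕ) : rsi w (last n) = 0 := by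
  simp [rsi, not_lt.mpr (le_last _)]

theorem vrsi_last (w : Fin (n + 1) → ℕ) : vrsi w (last n) = 0 := by
  simp [vrsi, rsi_last, last_mem_Rset]

theorem rsi_snoc_castSucc (i : Fin n) :
    rsi (snoc p a) (castSucc i) =
      #((Rset p).filter fun j => p j ≠ a ∧ i < j ∧ p j < p i) + if a < p i then 1 else 0 := by
  rw [rsi, Rset_snoc, filter_insert]
  simp only [filter_map, filter_filter, snoc_last, snoc_castSucc, castSucc_lt_last, true_and]
  split_ifs <;> simp [*]

theorem rsi_eq_card_add (i : Fin n) :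
    rsi p i = #((Rset p).filter fun j => p j ≠ a ∧ i < j ∧ p j < p i) +
      if a < p i ∧ ∃ j, i < j ∧ p j = a then 1 else 0 := by
  rw [rsi, ← card_filter_add_card_filter_not (fun j => p j ≠ a), filter_filter, filter_filter]
  congr 1
  · congr 1
    ext j
    simp only [mem_filter]
    tauto
  · by_cases hlt : a < p i
    · rw [if_congr (and_iff_right hlt) rfl rfl, ← card_filter_Rset_eq_and_lt]
      congr 1
      ext j
      simp only [mem_filter]
      constructor
      · rintro ⟨h, ⟨hij, -⟩, hja⟩
        exact ⟨h, not_not.mp hja, hij⟩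
      · rintro ⟨h, rfl, hij⟩
        exact ⟨h, ⟨hij, hlt⟩, not_not.mpr rfl⟩
    · rw [if_neg (fun h => hlt h.1), card_eq_zero, filter_eq_empty_iff]
      rintro j - ⟨⟨-, hj⟩, hja⟩
      exact hlt (not_not.mp hja ▸ hj)

theorem rs_snoc : rs (snoc p a) = rs p + largerAfterLast p a := by
  rw [rs, rs, largerAfterLast, Fin.sum_univ_castSucc, rsi_last, add_zero, card_filter,
    ← sum_add_distrib]
  refine sum_congr rfl fun i _ => ?_
  rw [rsi_snoc_castSucc, rsi_eq_card_add p a]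
  by_cases hlt : a < p i
  · have hlast : (∀ l, i ≤ l → p l ≠ a) ↔ ¬∃ j, i < j ∧ p j = a :=
      ⟨fun h ⟨j, hij, hj⟩ => h j hij.le hj, fun h l hil hl =>
        hil.lt_or_eq.elim (fun hil => h ⟨l, hil, hl⟩) (fun e => hlt.ne' (e ▸ hl))⟩
    simp only [hlt, true_and, hlast]
    split_ifs <;> omega
  · simp [hlt]

theorem largerAfterLast_snoc_self : largerAfterLast (snoc p a) a = 0 :=
  card_eq_zero.mpr (filter_eq_empty_iff.mpr fun i _ h => h.2 (last n) (le_last i) (snoc_last ..))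

theorem largerAfterLast_snoc_of_ne {l : ℕ} (hl : l ≠ a) :
    largerAfterLast (snoc p a) l = largerAfterLast p l + if l < a then 1 else 0 := by
  simp only [largerAfterLast, card_filter, Fin.sum_univ_castSucc, Fin.forall_fin_succ',
    snoc_castSucc, snoc_last, castSucc_le_castSucc_iff, last_le_iff]
  simp [hl.symm]

theorem sum_largerAfterLast_snoc (S : Finset ℕ) :
    ∑ l ∈ S, largerAfterLast (snoc p a) l + (if a ∈ S then largerAfterLast p a else 0) =
      ∑ l ∈ S, largerAfterLast p l + #(S.filter (· < a)) := by
  rw [← sum_ite_eq' S a, card_filter, ← sum_add_distrib, ← sum_add_distrib]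
  refine sum_congr rfl fun l _ => ?_
  by_cases hl : l = a
  · simp [hl, largerAfterLast_snoc_self]
  · simp [hl, largerAfterLast_snoc_of_ne p a hl]

theorem pro_le (w : Fin n → ℕ) : pro w ≤ n :=
  Finset.sup_le fun i _ => i.isLt

theorem pro_eq_of_mem_Rset {w : Fin n → ℕ} {t : Fin n} (ht : t ∈ Rset w) (h1 : w t = 1) :
    pro w = t + 1 := by
  refine le_antisymm (Finset.sup_le fun i hi => ?_)
    (le_sup (f := fun i : Fin n => (i : ℕ) + 1) (mem_filter.mpr ⟨mem_univ t, h1⟩))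
  have hit : i ≤ t := not_lt.mp fun hti => (mem_filter.mp ht).2 i hti
    ((mem_filter.mp hi).2.trans h1.symm)
  simpa using hit

theorem pro_snoc_one : pro (snoc p 1) = n + 1 := by
  simpa using pro_eq_of_mem_Rset (last_mem_Rset (snoc p 1)) (by simp)

theorem pro_snoc_of_ne (ha : a ≠ 1) : pro (snoc p a) = pro p := by
  have : univ.filter (fun i => (snoc p a : Fin (n + 1) → ℕ) i = 1) =
      (univ.filter (p · = 1)).map castSuccEmb := by
    ext j
    induction j using Fin.lastCases with
    | last => simp [ha, castSucc_ne_last]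
    | cast i => simp
  rw [pro, this, sup_map]
  rfl

theorem bk_snoc : bk (snoc p a) = max (bk p) a := by
  rw [bk, Fin.univ_castSuccEmb, sup_cons, sup_map, sup_comm]
  simp [Function.comp_def, bk]

theorem sup_filter_lt_castSucc (i : Fin n) :
    (univ.filter (· < castSucc i)).sup (snoc p a) = (univ.filter (· < i)).sup p := by
  have : univ.filter (· < castSucc i) = (univ.filter (· < i)).map castSuccEmb := by
    ext j
    induction j using Fin.lastCases with
    | last => simp [not_lt.mpr (le_last _)]
    | cast j => simp
  simp [this, sup_map, Function.comp_def]

theorem sup_filter_lt_last : (univ.filter (· < last n)).sup (snoc p a) = bk p := by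
  have : univ.filter (· < last n) = univ.map castSuccEmb := by
    ext j
    induction j using Fin.lastCases with
    | last => simp
    | cast j => simp [castSucc_lt_last]
  simp [this, sup_map, Function.comp_def, bk]

theorem image_snoc {α : Type*} [DecidableEq α] (q : Fin n → α) (x : α) :
    univ.image (snoc q x : Fin (n + 1) → α) = insert x (univ.image q) := by
  rw [Fin.univ_castSuccEmb, cons_eq_insert, image_insert, map_eq_image, image_image]
  simp [Function.comp_def]

end Snoc

theorem largerAfterLast_eq_zero_of_bk_le {p : Fin n → ℕ} {a : ℕ} (h : bk p ≤ a) :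
    largerAfterLast p a = 0 :=
  card_eq_zero.mpr (filter_eq_empty_iff.mpr fun i _ hi =>
    absurd hi.1 (not_lt.mpr ((le_sup (mem_univ i)).trans h)))

section PositiveWords

variable {w : Fin n → ℕ} {t : Fin n}

theorem largerAfterLast_one (hpos : ∀ i, 1 ≤ w i) (ht : t ∈ Rset w) (h1 : w t = 1) :
    largerAfterLast w 1 = n - pro w := by
  have : univ.filter (fun i => 1 < w i ∧ ∀ l, i ≤ l → w l ≠ 1) = Ioi t := by
    ext i
    simp only [mem_filter, mem_univ, true_and, mem_Ioi]
    refine ⟨fun hi => not_le.mp fun hit => hi.2 t hit h1, fun hti => ⟨?_, fun l hil => ?_⟩⟩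
    · exact (hpos i).lt_of_ne (h1 ▸ (mem_filter.mp ht).2 i hti).symm
    · exact h1 ▸ (mem_filter.mp ht).2 l (hti.trans_le hil)
  rw [pro_eq_of_mem_Rset ht h1, largerAfterLast, this, Fin.card_Ioi]
  omega

-- Here `pro w = t + 1`, and the truncated `rsi w i - 1` is never taken at `0`: a rightmost
-- occurrence before `t` has the smaller rightmost occurrence `t` to its right.
theorem vrsi_add_ite_add_ite (hpos : ∀ i, 1 ≤ w i) (ht : t ∈ Rset w) (h1 : w t = 1)
    (i : Fin n) :
    vrsi w i + (if i ∈ Rset w then 1 else 0) + (if i ≤ t then 1 else 0) =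
      rsi w i + 1 + if i = t then 1 else 0 := by
  have hrsi : i ∈ Rset w → (i : ℕ) < t → 1 ≤ rsi w i := fun hi hit => by
    refine card_pos.mpr ⟨t, mem_filter.mpr ⟨ht, Fin.lt_def.mpr hit, ?_⟩⟩
    have := (mem_filter.mp hi).2 t hit
    have := hpos i
    omega
  have htR : (i : ℕ) = t → i ∈ Rset w := fun h => Fin.ext h ▸ ht
  simp only [vrsi, pro_eq_of_mem_Rset ht h1, Fin.le_iff_val_le_val, Fin.ext_iff] at hrsi ⊢
  split_ifs <;> simp_all <;> omega

theorem vrs_add_card_Rset_add_pro (hpos : ∀ i, 1 ≤ w i) (ht : t ∈ Rset w) (h1 : w t = 1) :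
    vrs w + #(Rset w) + pro w = rs w + n + 1 := by
  have h := sum_congr rfl fun i (_ : i ∈ univ) => vrsi_add_ite_add_ite hpos ht h1 i
  simp only [sum_add_distrib, ← card_filter, Finset.sum_const, card_univ, Fintype.card_fin,
    smul_eq_mul, mul_one, sum_ite_eq', mem_univ, if_true, filter_ge_eq_Iic, Fin.card_Iic] at h
  rw [pro_eq_of_mem_Rset ht h1]
  simpa [vrs, rs] using h

end PositiveWords

section RGF

variable {p : Fin n → ℕ}

theorem isRGF_snoc_iff {a : ℕ} : IsRGF (snoc p a) ↔ IsRGF p ∧ 1 ≤ a ∧ a ≤ bk p + 1 := by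
  simp only [IsRGF, Fin.forall_fin_succ', snoc_castSucc, snoc_last, val_castSucc, val_last,
    sup_filter_lt_castSucc, sup_filter_lt_last]
  rcases n.eq_zero_or_pos with rfl | hn
  · simp [bk]
    omega
  · simp [hn.ne', hn]
    tauto

theorem IsRGF.image_eq_Icc (hp : IsRGF p) : univ.image p = Icc 1 (bk p) := by
  induction p using Fin.snocInduction with
  | elim0 => simp [bk]
  | snoc p a ih =>
    obtain ⟨hp, ha1, ha⟩ := isRGF_snoc_iff.mp hp
    rw [image_snoc, ih hp, bk_snoc]
    ext x
    simp only [mem_insert, mem_Icc]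
    omega

theorem IsRGF.card_Rset (hp : IsRGF p) : #(Rset p) = bk p := by
  rw [card_Rset_eq_card_image, hp.image_eq_Icc, Nat.card_Icc, Nat.add_sub_cancel]

theorem IsRGF.bk_le (hp : IsRGF p) : bk p ≤ n := by
  simpa [hp.card_Rset] using card_le_univ (Rset p)

theorem IsRGF.one_le_bk (hp : IsRGF p) (hn : 0 < n) : 1 ≤ bk p :=
  (hp.1 ⟨0, hn⟩).trans (le_sup (mem_univ _))

theorem IsRGF.exists_mem_Rset_eq_one (hp : IsRGF p) (hn : 0 < n) : ∃ t ∈ Rset p, p t = 1 := by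
  obtain ⟨t, ht, hpt, -⟩ := exists_mem_Rset_le (w := p) ⟨0, hn⟩
  exact ⟨t, ht, hpt.trans (hp.2.1 _ rfl)⟩

theorem IsRGF.vrs_add_bk_add_pro (hp : IsRGF p) (hn : 0 < n) :
    vrs p + bk p + pro p = rs p + n + 1 := by
  obtain ⟨t, ht, h1⟩ := hp.exists_mem_Rset_eq_one hn
  rw [← hp.card_Rset]
  exact vrs_add_card_Rset_add_pro hp.1 ht h1

theorem IsRGF.vrs_snoc_bk_add_one (hp : IsRGF p) : vrs (snoc p (bk p + 1)) = vrs p := by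
  rcases n.eq_zero_or_pos with rfl | hn
  · simpa [vrs] using vrsi_last (snoc p (bk p + 1))
  have hsnoc := (isRGF_snoc_iff.mpr ⟨hp, le_add_self, le_rfl⟩).vrs_add_bk_add_pro n.succ_pos
  rw [bk_snoc, pro_snoc_of_ne _ _ (by have := hp.one_le_bk hn; omega), rs_snoc,
    largerAfterLast_eq_zero_of_bk_le (Nat.le_succ _)] at hsnoc
  have := hp.vrs_add_bk_add_pro hn
  omega

theorem IsRGF.vrs_snoc_one (hp : IsRGF p) (hn : 0 < n) : vrs (snoc p 1) = vrs p := by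
  obtain ⟨t, ht, h1⟩ := hp.exists_mem_Rset_eq_one hn
  have hsnoc := (isRGF_snoc_iff.mpr ⟨hp, le_rfl, le_add_self⟩).vrs_add_bk_add_pro n.succ_pos
  rw [bk_snoc, pro_snoc_one, rs_snoc, largerAfterLast_one hp.1 ht h1,
    max_eq_left (hp.one_le_bk hn)] at hsnoc
  have := hp.vrs_add_bk_add_pro hn
  have := pro_le p
  omega

theorem IsRGF.vrs_snoc_of_two_le (hp : IsRGF p) {a : ℕ} (h2 : 2 ≤ a) (ha : a ≤ bk p) :
    vrs (snoc p a) = vrs p + largerAfterLast p a + 1 := by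
  have hn : 0 < n := by have := hp.bk_le; omega
  have hsnoc :=
    (isRGF_snoc_iff (a := a).mpr ⟨hp, by omega, by omega⟩).vrs_add_bk_add_pro n.succ_pos
  rw [bk_snoc, pro_snoc_of_ne _ _ (by omega), rs_snoc, max_eq_left ha] at hsnoc
  have := hp.vrs_add_bk_add_pro hn
  omega

end RGF

def vrsWeight (S : Finset ℕ) (w : Fin n → ℕ) : ℕ := vrs w + ∑ l ∈ S, largerAfterLast w l

section Weight

variable {p : Fin n → ℕ} (S : Finset ℕ)

theorem IsRGF.vrsWeight_snoc_bk_add_one (hp : IsRGF p) :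
    vrsWeight S (snoc p (bk p + 1)) = vrsWeight S p + #(S.filter (· < bk p + 1)) := by
  have h := sum_largerAfterLast_snoc p (bk p + 1) S
  rw [largerAfterLast_eq_zero_of_bk_le (Nat.le_succ _), ite_self, add_zero] at h
  rw [vrsWeight, vrsWeight, hp.vrs_snoc_bk_add_one, h, add_assoc]

theorem IsRGF.vrsWeight_snoc_one (hp : IsRGF p) (hn : 0 < n) (hS : ∀ l ∈ S, 2 ≤ l) :
    vrsWeight S (snoc p 1) = vrsWeight S p := by
  have h := sum_largerAfterLast_snoc p 1 S
  have h1 : 1 ∉ S := fun h => by have := hS 1 h; omega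
  rw [if_neg h1, add_zero, filter_false_of_mem fun l hl => by have := hS l hl; omega,
    card_empty, add_zero] at h
  rw [vrsWeight, vrsWeight, hp.vrs_snoc_one hn, h]

theorem IsRGF.vrsWeight_snoc_of_two_le (hp : IsRGF p) {a : ℕ} (h2 : 2 ≤ a) (ha : a ≤ bk p) :
    vrsWeight S (snoc p a) = vrsWeight (insert a S) p + (#(S.filter (· < a)) + 1) := by
  have h := sum_largerAfterLast_snoc p a S
  rw [vrsWeight, vrsWeight, hp.vrs_snoc_of_two_le h2 ha]
  by_cases haS : a ∈ S
  · rw [if_pos haS] at h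
    rw [insert_eq_of_mem haS]
    omega
  · rw [if_neg haS] at h
    rw [sum_insert haS]
    omega

end Weight

section Rank

variable {M : Type*} [AddCommMonoid M]

theorem sum_card_filter_lt {α : Type*} [LinearOrder α] (s : Finset α) (g : ℕ → M) :
    ∑ x ∈ s, g #(s.filter (· < x)) = ∑ i ∈ range #s, g i := by
  induction s using Finset.induction_on_max with
  | empty => simp
  | insert a s ha ih =>
    have has : a ∉ s := fun h => lt_irrefl a (ha a h)
    have hfa : (insert a s).filter (· < a) = s := by
      ext x
      simp only [mem_filter, mem_insert]
      exact ⟨fun ⟨hx, hxa⟩ => hx.resolve_left hxa.ne, fun hx => ⟨Or.inr hx, ha x hx⟩⟩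
    rw [sum_insert has, card_insert_of_notMem has, sum_range_succ, hfa, add_comm, ← ih]
    refine congrArg₂ _ (sum_congr rfl fun x hx => ?_) rfl
    rw [filter_insert, if_neg (not_lt.mpr (ha x hx).le)]

-- The letters of `S` receive their rank in `S`, the others `k - 1` minus their rank among the
-- others: the exponents enumerate `range k`.
theorem sum_Icc_card_filter_lt_add (k : ℕ) (S : Finset ℕ) (hS : ∀ l ∈ S, 2 ≤ l) (g : ℕ → M) :
    ∑ a ∈ Icc 2 (k + 1), g (#(S.filter (· < a)) + if a ∈ S then 0 else k + 1 - a) =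
      ∑ i ∈ range k, g i := by
  set A := (Icc 2 (k + 1)).filter (· ∈ S)
  set B := (Icc 2 (k + 1)).filter (· ∉ S)
  have hA : ∀ a ∈ Icc 2 (k + 1), S.filter (· < a) = A.filter (· < a) := by
    intro a ha
    ext l
    have := hS l
    simp only [A, mem_filter, mem_Icc] at ha ⊢
    constructor
    · rintro ⟨hl, hla⟩
      exact ⟨⟨⟨this hl, by omega⟩, hl⟩, hla⟩
    · rintro ⟨⟨-, hl⟩, hla⟩
      exact ⟨hl, hla⟩
  have hAB : ∀ a ∈ Icc 2 (k + 1), #(A.filter (· < a)) + #(B.filter (· < a)) = a - 2 := by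
    intro a ha
    have hT : (Icc 2 (k + 1)).filter (· < a) = Ico 2 a := by
      ext l
      simp only [mem_filter, mem_Icc, mem_Ico] at ha ⊢
      omega
    rw [← Nat.card_Ico 2 a, ← hT,
      ← card_filter_add_card_filter_not (s := (Icc 2 (k + 1)).filter (· < a)) (· ∈ S)]
    simp only [A, B, filter_filter, and_comm]
  have hcard : #A + #B = k := by
    rw [card_filter_add_card_filter_not, Nat.card_Icc]
    omega
  have hsumA : ∑ a ∈ A, g (#(S.filter (· < a)) + if a ∈ S then 0 else k + 1 - a) =
      ∑ a ∈ A, g #(A.filter (· < a)) := by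
    refine sum_congr rfl fun a ha => ?_
    obtain ⟨ha, haS⟩ := mem_filter.mp ha
    rw [if_pos haS, add_zero, hA a ha]
  have hsumB : ∑ a ∈ B, g (#(S.filter (· < a)) + if a ∈ S then 0 else k + 1 - a) =
      ∑ a ∈ B, g (k - 1 - #(B.filter (· < a))) := by
    refine sum_congr rfl fun a ha => ?_
    obtain ⟨ha, haS⟩ := mem_filter.mp ha
    have := hAB a ha
    have := mem_Icc.mp ha
    rw [if_neg haS, hA a ha]
    congr 1
    omega
  rw [← sum_filter_add_sum_filter_not (Icc 2 (k + 1)) (· ∈ S), hsumA, hsumB, sum_card_filter_lt,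
    sum_card_filter_lt B (fun i => g (k - 1 - i)), ← hcard, sum_range_add,
    ← sum_range_reflect (fun i => g (#A + i))]
  refine congrArg _ (sum_congr rfl fun i hi => congrArg g ?_)
  have := mem_range.mp hi
  omega

end Rank

-- The `ℕ`-valued images of the `Fin (n + 1)`-valued words summed over in `stmt9`.
open scoped Classical in
noncomputable def rgfs (n k : ℕ) : Finset (Fin n → ℕ) :=
  ((univ : Finset (Fin n → Fin (n + 1))).filter
    fun w => IsRGF (fun i => (w i : ℕ)) ∧ bk (fun i => (w i : ℕ)) = k).map
    Fin.valEmbedding.arrowCongrRight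

theorem mem_rgfs {k : ℕ} {w : Fin n → ℕ} : w ∈ rgfs n k ↔ IsRGF w ∧ bk w = k := by
  simp only [rgfs, mem_map, mem_filter, mem_univ, true_and]
  constructor
  · rintro ⟨v, hv, rfl⟩
    exact hv
  · rintro ⟨hw, rfl⟩
    exact ⟨fun i => ⟨w i, Nat.lt_succ_of_le ((le_sup (mem_univ i)).trans hw.bk_le)⟩, ⟨hw, rfl⟩,
      rfl⟩

theorem sum_rgfs_succ {M : Type*} [AddCommMonoid M] (k : ℕ) (F : (Fin (n + 1) → ℕ) → M) :
    ∑ w ∈ rgfs (n + 1) (k + 1), F w =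
      ∑ p ∈ rgfs n k, F (snoc p (k + 1)) +
        ∑ p ∈ rgfs n (k + 1), ∑ a ∈ Icc 1 (k + 1), F (snoc p a) := by
  have hnew : ∑ p ∈ rgfs n k, F (snoc p (k + 1)) =
      ∑ x ∈ rgfs n k ×ˢ {k + 1}, F (snoc x.1 x.2) := by
    simp
  rw [hnew, ← sum_product (f := fun x => F (snoc x.1 x.2)), ← sum_union]
  · refine (sum_equiv ((Equiv.prodComm _ _).trans (Fin.snocEquiv fun _ => ℕ)) ?_
      fun _ _ => rfl).symm
    rintro ⟨p, a⟩
    show _ ↔ (snoc p a : Fin (n + 1) → ℕ) ∈ _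
    simp only [mem_union, mem_product, mem_singleton, mem_Icc, mem_rgfs, isRGF_snoc_iff, bk_snoc]
    by_cases hp : IsRGF p
    · simp only [hp, true_and]
      omega
    · simp [hp]
  · refine disjoint_left.mpr fun x hx hx' => ?_
    have := (mem_rgfs.mp (mem_product.mp hx).1).2
    have := (mem_rgfs.mp (mem_product.mp hx').1).2
    omega

open Polynomial

theorem qint_succ (k : ℕ) : qint (k + 1) = 1 + ∑ i ∈ range k, (X : ℚ[X]) ^ (i + 1) := by
  rw [qint, sum_range_succ', pow_zero, add_comm]

theorem sum_sub_add_card_filter_lt (k : ℕ) (S : Finset ℕ) :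
    ∑ l ∈ S, (k - l) + #(S.filter (· < k + 1)) = ∑ l ∈ S, (k + 1 - l) := by
  rw [card_filter, ← sum_add_distrib]
  refine sum_congr rfl fun l _ => ?_
  split_ifs <;> omega

theorem sum_sub_insert (k a : ℕ) (S : Finset ℕ) :
    ∑ l ∈ insert a S, (k - l) = ∑ l ∈ S, (k - l) + if a ∈ S then 0 else k - a := by
  by_cases haS : a ∈ S
  · rw [insert_eq_of_mem haS, if_pos haS, add_zero]
  · rw [sum_insert haS, if_neg haS, add_comm]

section GeneratingFunction

variable {R : Type*} [CommSemiring R] (q : R) (S : Finset ℕ)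

theorem sum_rgfs_pow_vrsWeight_snoc_succ (k : ℕ) :
    ∑ p ∈ rgfs n k, q ^ vrsWeight S (snoc p (k + 1)) =
      q ^ #(S.filter (· < k + 1)) * ∑ p ∈ rgfs n k, q ^ vrsWeight S p := by
  rw [mul_sum]
  refine sum_congr rfl fun p hmem => ?_
  obtain ⟨hp, rfl⟩ := mem_rgfs.mp hmem
  rw [hp.vrsWeight_snoc_bk_add_one, pow_add, mul_comm]

theorem sum_rgfs_pow_vrsWeight_snoc_one (k : ℕ) (hS : ∀ l ∈ S, 2 ≤ l) :
    ∑ p ∈ rgfs n (k + 1), q ^ vrsWeight S (snoc p 1) =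
      ∑ p ∈ rgfs n (k + 1), q ^ vrsWeight S p := by
  refine sum_congr rfl fun p hmem => ?_
  obtain ⟨hp, hk⟩ := mem_rgfs.mp hmem
  rw [hp.vrsWeight_snoc_one S (by have := hp.bk_le; omega) hS]

theorem sum_rgfs_pow_vrsWeight_snoc_of_two_le {k a : ℕ} (h2 : 2 ≤ a) (ha : a ≤ k) :
    ∑ p ∈ rgfs n k, q ^ vrsWeight S (snoc p a) =
      q ^ (#(S.filter (· < a)) + 1) * ∑ p ∈ rgfs n k, q ^ vrsWeight (insert a S) p := by
  rw [mul_sum]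
  refine sum_congr rfl fun p hmem => ?_
  obtain ⟨hp, rfl⟩ := mem_rgfs.mp hmem
  rw [hp.vrsWeight_snoc_of_two_le S h2 ha, pow_add, mul_comm]

end GeneratingFunction

theorem sum_rgfs_X_pow_vrsWeight (n k : ℕ) (S : Finset ℕ) (hS : ∀ l ∈ S, 2 ≤ l) :
    ∑ w ∈ rgfs n k, (X : ℚ[X]) ^ vrsWeight S w = X ^ (∑ l ∈ S, (k - l)) * Sqt n k := by
  induction n generalizing k S with
  | zero =>
    rcases k with _ | k
    · have : rgfs 0 0 = {Fin.elim0} := by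
        ext w
        simp [mem_rgfs, IsRGF, bk, Subsingleton.elim w Fin.elim0]
      simp [this, vrsWeight, vrs, largerAfterLast, Sqt]
    · have : rgfs 0 (k + 1) = ∅ := eq_empty_of_forall_notMem fun w hw => by
        simpa [bk] using (mem_rgfs.mp hw).2
      simp [this, Sqt]
  | succ n ih =>
    rcases k with _ | k
    · have : rgfs (n + 1) 0 = ∅ := eq_empty_of_forall_notMem fun w hw => by
        have := (mem_rgfs.mp hw).1.one_le_bk n.succ_pos
        have := (mem_rgfs.mp hw).2
        omega
      simp [this, Sqt]
    have hmid : ∑ a ∈ Icc 2 (k + 1), ∑ p ∈ rgfs n (k + 1), (X : ℚ[X]) ^ vrsWeight S (snoc p a) =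
        X ^ (∑ l ∈ S, (k + 1 - l)) * Sqt n (k + 1) * ∑ i ∈ range k, X ^ (i + 1) := by
      rw [← sum_Icc_card_filter_lt_add k S hS, mul_sum]
      refine sum_congr rfl fun a ha => ?_
      have ha := mem_Icc.mp ha
      have hS' : ∀ l ∈ insert a S, 2 ≤ l := by
        simpa only [forall_mem_insert] using ⟨ha.1, hS⟩
      rw [sum_rgfs_pow_vrsWeight_snoc_of_two_le _ _ ha.1 ha.2, ih (k + 1) _ hS', sum_sub_insert]
      ring
    have hIcc : Icc 1 (k + 1) = insert 1 (Icc 2 (k + 1)) :=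
      (insert_Icc_add_one_left_eq_Icc (by omega)).symm
    rw [sum_rgfs_succ, hIcc]
    simp only [sum_insert (by simp : 1 ∉ Icc 2 (k + 1)), sum_add_distrib]
    rw [sum_comm (s := rgfs n (k + 1)), hmid, sum_rgfs_pow_vrsWeight_snoc_succ,
      sum_rgfs_pow_vrsWeight_snoc_one _ _ _ hS, ih k S hS, ih (k + 1) S hS, Sqt, qint_succ,
      ← sum_sub_add_card_filter_lt]
    ring

open scoped Classical in
theorem stmt9_general (n k : ℕ) :
    ∑ w ∈ (Finset.univ : Finset (Fin n → Fin (n + 1))).filter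
        (fun w => IsRGF (fun i => (w i : ℕ)) ∧ bk (fun i => (w i : ℕ)) = k),
      (Polynomial.X : Polynomial ℚ) ^ vrs (fun i => (w i : ℕ)) = Sqt n k := by
  have h := sum_rgfs_X_pow_vrsWeight n k ∅ (by simp)
  simp only [rgfs, sum_map, vrsWeight, sum_empty, add_zero, pow_zero, one_mul] at h
  exact h

open scoped Classical in
/-- The sum of q^{vrs(w)} over all RGFs of length n with maximum letter k is S̃_q(n,k). -/
theorem stmt9 (n k : ℕ) (hk : 1 ≤ k) (hn : k ≤ n) :
    ∑ w ∈ (Finset.univ : Finset (Fin n → Fin (n + 1))).filter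
        (fun w => IsRGF (fun i => (w i : ℕ)) ∧ bk (fun i => (w i : ℕ)) = k),
      (Polynomial.X : Polynomial ℚ) ^ vrs (fun i => (w i : ℕ)) = Sqt n k :=
  stmt9_general n k
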